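/- On the probability space of the strong approximation theorem (where sup_{u} |n^{1/2} A_n(u) − K*_C(u,n)| = O(n^{1/2−1/(4d)}(log n)^{3/2}) almost surely, with C twice continuously differentiable on (0,1)^d and second-order partials continuous on [0,1]^d), one has almost surely limsup_{n→∞} (n/(2 log log n))^{1/2} sup_{u ∈ [0,1]^d} |C_n(u) − C(u)| = limsup_{n→∞} sup_{u ∈ [0,1]^d} |K*_C(u,n)| / (2 n log log n)^{1/2}. -/

import Mathlib

open MeasureTheory ProbabilityTheory Filter Set

noncomputable section

/-- The closed unit cube `[0,1]^d`. -/
def unitCube (d : ℕ) : Set (Fin d → ℝ) := Set.univ.pi fun _ => Set.Icc (0:ℝ) 1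

/-- The open unit cube `(0,1)^d`. -/
def openCube (d : ℕ) : Set (Fin d → ℝ) := Set.univ.pi fun _ => Set.Ioo (0:ℝ) 1

/-- Marginal empirical distribution function `G_{n}` built from a sequence `U`. -/
def empG (U : ℕ → ℝ) (n : ℕ) (u : ℝ) : ℝ :=
  (∑ i ∈ Finset.range n, if U i ≤ u then (1:ℝ) else 0) / n

/-- Generalized inverse `G_n^{-}`. -/
def empGinv (U : ℕ → ℝ) (n : ℕ) (u : ℝ) : ℝ := sInf {t : ℝ | u ≤ empG U n t}

/-- The empirical distribution function `C̃_n` of the (unobservable) uniforms. -/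
def empCt {d : ℕ} (U : Fin d → ℕ → ℝ) (n : ℕ) (u : Fin d → ℝ) : ℝ :=
  (∑ i ∈ Finset.range n, ∏ j, if U j i ≤ u j then (1:ℝ) else 0) / n

/-- The empirical copula `C_n`. -/
def empCop {d : ℕ} (U : Fin d → ℕ → ℝ) (n : ℕ) (u : Fin d → ℝ) : ℝ :=
  empCt U n fun j => empGinv (U j) n (u j)

/-- Joint distribution function of a law `μ` on `ℝ^d`. -/
def distF {d : ℕ} (μ : Measure (Fin d → ℝ)) (x : Fin d → ℝ) : ℝ :=
  (μ {y | ∀ j, y j ≤ x j}).toReal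

/-- Marginal distribution functions of a law `μ` on `ℝ^d`. -/
def margF {d : ℕ} (μ : Measure (Fin d → ℝ)) (j : Fin d) (x : ℝ) : ℝ :=
  (μ {y | y j ≤ x}).toReal

/-- Generalized inverse (quantile function) of a distribution function. -/
def qInv (F : ℝ → ℝ) (u : ℝ) : ℝ := sInf {x : ℝ | u ≤ F x}

/-- The copula of a law `μ` on `ℝ^d`: `C(u) = F(F_1^{-}(u_1),…,F_d^{-}(u_d))`. -/
def copulaOf {d : ℕ} (μ : Measure (Fin d → ℝ)) (u : Fin d → ℝ) : ℝ :=
  distF μ fun j => qInv (margF μ j) (u j)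

/-- The sequence of uniforms `U_{ji} = F_j(X_{ji})` attached to the data `X` at `ω`. -/
def unifOf {d : ℕ} {Ω : Type*} (μ : Measure (Fin d → ℝ)) (X : ℕ → Ω → Fin d → ℝ)
    (ω : Ω) (j : Fin d) (i : ℕ) : ℝ := margF μ j (X i ω j)

/-- `X_1, X_2, …` is an i.i.d. sequence of measurable random vectors. -/
def IsIIDSeq {d : ℕ} {Ω : Type*} [MeasurableSpace Ω] (P : Measure Ω)
    (X : ℕ → Ω → Fin d → ℝ) : Prop :=
  (∀ i, Measurable (X i)) ∧ iIndepFun X P ∧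
    ∀ i, Measure.map (X i) P = Measure.map (X 0) P

/-- A real-valued stochastic process indexed by `ι` is a (centered) Gaussian family:
every finite linear combination is a centered real Gaussian variable. -/
def IsGaussianFamily {Ω ι : Type*} [MeasurableSpace Ω] (P : Measure Ω)
    (Z : ι → Ω → ℝ) : Prop :=
  ∀ (m : ℕ) (c : Fin m → ℝ) (t : Fin m → ι), ∃ v : NNReal,
    Measure.map (fun ω => ∑ i, c i * Z (t i) ω) P = gaussianReal 0 v

/-- `C` is twice continuously differentiable on `(0,1)^d` and all its second-order
partial derivatives extend continuously to `[0,1]^d`. -/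
def SecondOrderSmooth (d : ℕ) (C : (Fin d → ℝ) → ℝ) : Prop :=
  ContDiffOn ℝ 2 C (openCube d) ∧
  ∀ j k : Fin d, ∃ g : (Fin d → ℝ) → ℝ, ContinuousOn g (unitCube d) ∧
    ∀ u ∈ openCube d,
      g u = fderiv ℝ (fun v => fderiv ℝ C v (Pi.single j 1)) u (Pi.single k 1)

/-- `Cp j` is the (continuous extension to `[0,1]^d` of the) first-order partial
derivative `∂C/∂u_j`. -/
def IsPartialDerivs (d : ℕ) (C : (Fin d → ℝ) → ℝ) (Cp : Fin d → (Fin d → ℝ) → ℝ) : Prop :=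
  ∀ j, ContinuousOn (Cp j) (unitCube d) ∧
    ∀ u ∈ openCube d, Cp j u = fderiv ℝ C u (Pi.single j 1)

/-- A Kiefer process associated with the copula `C`: a centered Gaussian process on
`[0,1]^d × [0,∞)` with covariance `(z ∧ t){C(u ∧ v) − C(u)C(v)}`. -/
def IsKieferCopula {d : ℕ} {Ω : Type*} [MeasurableSpace Ω] (P : Measure Ω)
    (C : (Fin d → ℝ) → ℝ) (K : (Fin d → ℝ) → ℝ → Ω → ℝ) : Prop :=
  (∀ u t, Measurable (K u t)) ∧
  IsGaussianFamily P (fun p : (Fin d → ℝ) × ℝ => K p.1 p.2) ∧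
  (∀ u ∈ unitCube d, ∀ t : ℝ, 0 ≤ t → ∫ ω, K u t ω ∂P = 0) ∧
  (∀ u ∈ unitCube d, ∀ v ∈ unitCube d, ∀ z t : ℝ, 0 ≤ z → 0 ≤ t →
    ∫ ω, K u z ω * K v t ω ∂P
      = min z t * (C (fun j => min (u j) (v j)) - C u * C v))

/-- The copula Gaussian process
`K*_C(u,t) = K_C(u,t) − Σ_j (∂C(u)/∂u_j) K_C(1,…,1,u_j,1,…,1,t)`. -/
def copulaGaussian {d : ℕ} {Ω : Type*} (Cp : Fin d → (Fin d → ℝ) → ℝ)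
    (K : (Fin d → ℝ) → ℝ → Ω → ℝ) (u : Fin d → ℝ) (t : ℝ) (ω : Ω) : ℝ :=
  K u t ω - ∑ j, Cp j u * K (Function.update (fun _ => (1:ℝ)) j (u j)) t ω

end

/-!
On the event of the strong approximation, for every `u` the error
`|n (C_n(u) - C(u)) - K*_C(u,n)|` is at most `c n^{1/2 - 1/(4d)} (log n)^{3/2}`. Taking
suprema over `[0,1]^d` is 1-Lipschitz for the uniform distance, and dividing by
`√(2 n log log n) ≥ √n` leaves `c (log n)^{3/2} / n^{1/(4d)} → 0`. So the two normalized
sequences differ by a null sequence, and the limsup of a real sequence does not see a null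
perturbation.
-/

open scoped Topology

section LimsupPerturbation

variable {ι : Type*} {f : Filter ι} [f.NeBot]

/-- The junk value `0` of `limsup` on `ℝ`, taken when the sequence is not bounded above or not
cobounded, is also respected: both conditions are stable under null perturbations. -/
theorem limsup_add_eq_of_tendsto_zero {u w : ι → ℝ} (hw : Tendsto w f (𝓝 0)) :
    limsup (u + w) f = limsup u f := by
  have hw_le : f.IsBoundedUnder (· ≤ ·) w := hw.isBoundedUnder_le
  have hw_ge : f.IsBoundedUnder (· ≥ ·) w := hw.isBoundedUnder_ge
  have hnw : Tendsto (-w) f (𝓝 0) := by simpa [Pi.neg_def] using hw.neg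
  have hu_eq : u = (u + w) + -w := by ext; simp
  by_cases hb : f.IsBoundedUnder (· ≤ ·) u
  · by_cases hc : f.IsCoboundedUnder (· ≤ ·) u
    · refine le_antisymm ?_ ?_
      · simpa [add_comm w, hw.limsup_eq] using limsup_add_le hw_ge hw_le hc hb
      · simpa [hw.liminf_eq] using le_limsup_add hb hc hw_le hw_ge
    · have hc' : ¬ f.IsCoboundedUnder (· ≤ ·) (u + w) := fun h ↦
        hc (hu_eq ▸ add_comm (u + w) (-w) ▸ isCoboundedUnder_le_add hnw.isBoundedUnder_ge h)
      rw [Real.limsup_of_not_isCoboundedUnder hc, Real.limsup_of_not_isCoboundedUnder hc']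
  · have hb' : ¬ f.IsBoundedUnder (· ≤ ·) (u + w) := fun h ↦
      hb (hu_eq ▸ isBoundedUnder_le_add h hnw.isBoundedUnder_le)
    rw [Real.limsup_of_not_isBoundedUnder hb, Real.limsup_of_not_isBoundedUnder hb']

theorem limsup_eq_limsup_of_tendsto_sub {u v : ι → ℝ} (h : Tendsto (u - v) f (𝓝 0)) :
    limsup u f = limsup v f := by
  simpa using limsup_add_eq_of_tendsto_zero (u := v) h

end LimsupPerturbation

theorem abs_ciSup_sub_ciSup_le {ι : Sort*} {f g : ι → ℝ} {E : ℝ} (hE : 0 ≤ E)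
    (hf : BddAbove (range f)) (h : ∀ i, |f i - g i| ≤ E) :
    |(⨆ i, f i) - ⨆ i, g i| ≤ E := by
  rcases isEmpty_or_nonempty ι with hι | hι
  · simpa [Real.iSup_of_isEmpty] using hE
  obtain ⟨M, hM⟩ := hf
  have hg : BddAbove (range g) := ⟨M + E, by
    rintro _ ⟨i, rfl⟩
    linarith [(abs_le.1 (h i)).1, hM ⟨i, rfl⟩]⟩
  rw [abs_sub_le_iff, sub_le_iff_le_add, sub_le_iff_le_add]
  constructor
  · refine ciSup_le fun i ↦ ?_
    linarith [(abs_le.1 (h i)).2, le_ciSup hg i]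
  · refine ciSup_le fun i ↦ ?_
    linarith [(abs_le.1 (h i)).1, le_ciSup ⟨M, hM⟩ i]

theorem abs_biSup_sub_biSup_le {ι : Type*} {s : Set ι} {f g : ι → ℝ} {E : ℝ} (hE : 0 ≤ E)
    (hf : BddAbove (f '' s)) (h : ∀ i ∈ s, |f i - g i| ≤ E) :
    |(⨆ i ∈ s, f i) - ⨆ i ∈ s, g i| ≤ E := by
  obtain ⟨M, hM⟩ := hf
  refine abs_ciSup_sub_ciSup_le hE ⟨max M 0, ?_⟩ fun i ↦ ?_
  · rintro _ ⟨i, rfl⟩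
    by_cases hi : i ∈ s
    · simpa [ciSup_pos hi] using Or.inl (hM ⟨i, hi, rfl⟩)
    · simp [ciSup_neg hi]
  · by_cases hi : i ∈ s
    · simpa [ciSup_pos hi] using h i hi
    · simpa [ciSup_neg hi] using hE

theorem sqrt_div_eq_div_sqrt_mul {x : ℝ} (hx : 0 ≤ x) (y : ℝ) :
    √(x / y) = x / √(x * y) := by
  rcases hx.eq_or_lt with rfl | hx
  · simp
  have hsq : √x ≠ 0 := (Real.sqrt_pos.2 hx).ne'
  rw [Real.sqrt_div hx.le, Real.sqrt_mul hx.le, ← mul_div_mul_left _ _ hsq,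
    Real.mul_self_sqrt hx.le]

theorem abs_sqrt_mul_biSup_sub_biSup_div_le {ι : Type*} {s : Set ι} {D K : ι → ℝ}
    {n L E : ℝ} (hn : 0 ≤ n) (hE : 0 ≤ E) (hD : BddAbove ((fun i ↦ |D i|) '' s))
    (h : ∀ i ∈ s, |√n * (√n * D i) - K i| ≤ E) :
    |√(n / (2 * L)) * (⨆ i ∈ s, |D i|) - (⨆ i ∈ s, |K i|) / √(2 * n * L)| ≤
      E / √(2 * n * L) := by
  have hscale : n * (⨆ i ∈ s, |D i|) = ⨆ i ∈ s, |√n * (√n * D i)| := by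
    simp only [Real.mul_iSup_of_nonneg hn, ← mul_assoc, Real.mul_self_sqrt hn, abs_mul,
      abs_of_nonneg hn]
  have hbdd : BddAbove ((fun i ↦ |√n * (√n * D i)|) '' s) := by
    obtain ⟨M, hM⟩ := hD
    refine ⟨n * M, ?_⟩
    rintro _ ⟨i, hi, rfl⟩
    dsimp only
    rw [← mul_assoc, Real.mul_self_sqrt hn, abs_mul, abs_of_nonneg hn]
    exact mul_le_mul_of_nonneg_left (hM ⟨i, hi, rfl⟩) hn
  rw [show 2 * n * L = n * (2 * L) by ring, sqrt_div_eq_div_sqrt_mul hn, div_mul_eq_mul_div,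
    hscale, ← sub_div, abs_div, abs_of_nonneg (Real.sqrt_nonneg _)]
  gcongr
  exact abs_biSup_sub_biSup_le hE hbdd fun i hi ↦
    (abs_abs_sub_abs_le_abs_sub _ _).trans (h i hi)

theorem tendsto_rpow_mul_log_rpow_div_sqrt_loglog {γ : ℝ} (hγ : 0 < γ) (p : ℝ) :
    Tendsto (fun x : ℝ ↦ x ^ ((1 : ℝ) / 2 - γ) * Real.log x ^ p /
      √(2 * x * Real.log (Real.log x))) atTop (𝓝 0) := by
  refine squeeze_zero' ?_ ?_ (isLittleO_log_rpow_rpow_atTop p hγ).tendsto_div_nhds_zero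
  · filter_upwards [eventually_ge_atTop 1] with x hx
    have hlog := Real.log_nonneg hx
    positivity
  have hloglog : ∀ᶠ x : ℝ in atTop, 1 / 2 ≤ Real.log (Real.log x) :=
    (Real.tendsto_log_atTop.comp Real.tendsto_log_atTop).eventually_ge_atTop _
  filter_upwards [eventually_ge_atTop 1, hloglog] with x hx hL
  have hx0 : 0 < x := by linarith
  have hlog := Real.log_nonneg hx
  calc x ^ ((1 : ℝ) / 2 - γ) * Real.log x ^ p / √(2 * x * Real.log (Real.log x))
      ≤ x ^ ((1 : ℝ) / 2 - γ) * Real.log x ^ p / √x := by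
        gcongr
        nlinarith
    _ = Real.log x ^ p / x ^ γ := by
        rw [Real.rpow_sub hx0, Real.sqrt_eq_rpow]
        field_simp

theorem empCt_mem_Icc {d : ℕ} (U : Fin d → ℕ → ℝ) (n : ℕ) (u : Fin d → ℝ) :
    empCt U n u ∈ Icc 0 1 := by
  unfold empCt
  refine ⟨by positivity, div_le_one_of_le₀ ?_ (Nat.cast_nonneg n)⟩
  calc _ ≤ ∑ _i ∈ Finset.range n, (1 : ℝ) :=
        Finset.sum_le_sum fun i _ ↦ Finset.prod_le_one (fun j _ ↦ by positivity)
          fun j _ ↦ by split_ifs <;> norm_num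
    _ = n := by simp

theorem copulaOf_mem_Icc {d : ℕ} (μ : Measure (Fin d → ℝ)) [IsFiniteMeasure μ]
    (u : Fin d → ℝ) : copulaOf μ u ∈ Icc 0 (μ.real univ) :=
  ⟨ENNReal.toReal_nonneg, measureReal_mono (subset_univ _)⟩

theorem abs_empCop_sub_copulaOf_le {d : ℕ} (U : Fin d → ℕ → ℝ) (n : ℕ)
    (μ : Measure (Fin d → ℝ)) [IsFiniteMeasure μ] (u : Fin d → ℝ) :
    |empCop U n u - copulaOf μ u| ≤ 1 + μ.real univ := by
  have hC := copulaOf_mem_Icc μ u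
  have hCn : empCop U n u ∈ Icc 0 1 := empCt_mem_Icc U n _
  rw [abs_le]
  constructor <;> linarith [hC.1, hC.2, hCn.1, hCn.2]

theorem lil_transfer_general
    {d : ℕ} (hd : 0 < d) {Ω : Type*} [MeasurableSpace Ω]
    (P : Measure Ω) [IsProbabilityMeasure P]
    (X : ℕ → Ω → Fin d → ℝ)
    (μ : Measure (Fin d → ℝ)) (hμ : Measure.map (X 0) P = μ)
    (Cp : Fin d → (Fin d → ℝ) → ℝ)
    (K : (Fin d → ℝ) → ℝ → Ω → ℝ)
    (hSA : ∀ᵐ ω ∂P, ∃ c > (0:ℝ), ∀ᶠ n : ℕ in atTop, ∀ u ∈ unitCube d,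
      |Real.sqrt n *
          (Real.sqrt n * (empCop (unifOf μ X ω) n u - copulaOf μ u)) -
        copulaGaussian Cp K u n ω| ≤
        c * (n : ℝ) ^ ((1:ℝ)/2 - 1/(4*(d:ℝ))) * Real.log n ^ ((3:ℝ)/2)) :
    ∀ᵐ ω ∂P,
      Filter.limsup (fun n : ℕ =>
          Real.sqrt ((n : ℝ) / (2 * Real.log (Real.log n))) *
            ⨆ u ∈ unitCube d, |empCop (unifOf μ X ω) n u - copulaOf μ u|)
        Filter.atTop
      = Filter.limsup (fun n : ℕ =>
          (⨆ u ∈ unitCube d, |copulaGaussian Cp K u n ω|) /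
            Real.sqrt (2 * (n : ℝ) * Real.log (Real.log n)))
        Filter.atTop := by
  have : IsFiniteMeasure μ := hμ ▸ Measure.isFiniteMeasure_map P (X 0)
  have hγ : (0 : ℝ) < 1 / (4 * d) := by positivity
  filter_upwards [hSA] with ω ⟨c, hc, hev⟩
  have hrate : Tendsto (fun n : ℕ ↦ c * (n : ℝ) ^ ((1 : ℝ) / 2 - 1 / (4 * d)) *
      Real.log n ^ ((3 : ℝ) / 2) / √(2 * n * Real.log (Real.log n))) atTop (𝓝 0) := by
    simpa only [mul_zero] using
      (((tendsto_rpow_mul_log_rpow_div_sqrt_loglog hγ _).comp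
        tendsto_natCast_atTop_atTop).const_mul c).congr fun n ↦ by
          simp only [Function.comp_apply]; ring
  refine limsup_eq_limsup_of_tendsto_sub (squeeze_zero_norm' ?_ hrate)
  have hbdd (n : ℕ) : BddAbove
      ((fun u ↦ |empCop (unifOf μ X ω) n u - copulaOf μ u|) '' unitCube d) :=
    ⟨1 + μ.real univ, by rintro _ ⟨u, -, rfl⟩; exact abs_empCop_sub_copulaOf_le _ n μ u⟩
  filter_upwards [hev] with n hn
  rw [Real.norm_eq_abs, Pi.sub_apply]
  exact abs_sqrt_mul_biSup_sub_biSup_div_le (Nat.cast_nonneg n) (by positivity) (hbdd n) hn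

/-- **Transfer of the LIL through the strong approximation.**  On the probability
space of the strong approximation theorem, almost surely,
`limsup_n (n/(2 log log n))^{1/2} sup_u |C_n(u) − C(u)|
  = limsup_n sup_u |K*_C(u,n)| / (2 n log log n)^{1/2}`. -/
theorem lil_transfer
    {d : ℕ} (hd : 0 < d) {Ω : Type*} [MeasurableSpace Ω]
    (P : Measure Ω) [IsProbabilityMeasure P]
    (X : ℕ → Ω → Fin d → ℝ) (hX : IsIIDSeq P X)
    (μ : Measure (Fin d → ℝ)) (hμ : Measure.map (X 0) P = μ)
    (hmarg : ∀ j, Continuous (margF μ j))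
    (Cp : Fin d → (Fin d → ℝ) → ℝ)
    (hsmooth : SecondOrderSmooth d (copulaOf μ))
    (hCp : IsPartialDerivs d (copulaOf μ) Cp)
    (K : (Fin d → ℝ) → ℝ → Ω → ℝ) (hK : IsKieferCopula P (copulaOf μ) K)
    (hSA : ∀ᵐ ω ∂P, ∃ c > (0:ℝ), ∀ᶠ n : ℕ in atTop, ∀ u ∈ unitCube d,
      |Real.sqrt n *
          (Real.sqrt n * (empCop (unifOf μ X ω) n u - copulaOf μ u)) -
        copulaGaussian Cp K u n ω| ≤
        c * (n : ℝ) ^ ((1:ℝ)/2 - 1/(4*(d:ℝ))) * Real.log n ^ ((3:ℝ)/2)) :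
    ∀ᵐ ω ∂P,
      Filter.limsup (fun n : ℕ =>
          Real.sqrt ((n : ℝ) / (2 * Real.log (Real.log n))) *
            ⨆ u ∈ unitCube d, |empCop (unifOf μ X ω) n u - copulaOf μ u|)
        Filter.atTop
      = Filter.limsup (fun n : ℕ =>
          (⨆ u ∈ unitCube d, |copulaGaussian Cp K u n ω|) /
            Real.sqrt (2 * (n : ℝ) * Real.log (Real.log n)))
        Filter.atTop :=
  lil_transfer_general hd P X μ hμ Cp K hSA
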